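/- Let λ be a real number with −1 < λ < 0 or 0 < λ < 1/3 (i.e., λ ≠ 0 outside the zero-stability region). Then the quadratic factor q_λ has a real root ρ with |ρ| > 1, and consequently there exists a sequence y : ℕ → ℝ satisfying the homogeneous ZeroSNet recurrence y(n+3) = α₀(λ)·y(n+2) + α₁(λ)·y(n+1) + α₂(λ)·y(n) for all n ∈ ℕ such that |y(n)| → ∞ as n → ∞. -/

import Mathlib

/-!
Clearing the denominator `4λ`, `q_λ` becomes `p(ρ) = 4λρ² + (λ - 3)ρ + (1 + λ)`, with
`p(1) = 6λ - 2` and `p(-1) = 4λ + 4`. For `0 < λ < 1/3` the parabola opens upwards and is negative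
at `1`, so it has a root beyond `1`; for `-1 < λ < 0` it opens downwards and is positive at `-1`,
so it has a root below `-1`. Since the characteristic polynomial of the recurrence is
`(ρ - 1) q_λ(ρ)`, the geometric sequence `ρⁿ` built on such a root solves the recurrence and
blows up.
-/

/-- ZeroSNet coefficient α₀(λ) = 3(1+λ)/(4λ). -/
noncomputable def zerosAlpha0 (l : ℝ) : ℝ := 3 * (1 + l) / (4 * l)

/-- ZeroSNet coefficient α₁(λ) = −1/λ. -/
noncomputable def zerosAlpha1 (l : ℝ) : ℝ := -1 / l

/-- ZeroSNet coefficient α₂(λ) = (1+λ)/(4λ). -/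
noncomputable def zerosAlpha2 (l : ℝ) : ℝ := (1 + l) / (4 * l)

/-- The quadratic factor of the ZeroSNet characteristic polynomial over ℝ:
`q_λ(ρ) = ρ² + ((λ−3)/(4λ))ρ + (1+λ)/(4λ)`. -/
noncomputable def zerosQuadFactorR (l : ℝ) (ρ : ℝ) : ℝ :=
  ρ ^ 2 + ((l - 3) / (4 * l)) * ρ + (1 + l) / (4 * l)

theorem exists_quadratic_eq_zero_lt_and_gt {a b c x₀ : ℝ} (ha : 0 < a)
    (h : a * (x₀ * x₀) + b * x₀ + c < 0) :
    (∃ x, a * (x * x) + b * x + c = 0 ∧ x < x₀) ∧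
      (∃ x, a * (x * x) + b * x + c = 0 ∧ x₀ < x) := by
  set s := √(discrim a b c)
  -- `4a (a x₀² + b x₀ + c) = (2a x₀ + b)² - discrim a b c`
  have hdiscrim : (2 * a * x₀ + b) ^ 2 < discrim a b c := by
    rw [discrim]
    nlinarith
  have hs : |2 * a * x₀ + b| < s := by
    rw [Real.lt_sqrt (abs_nonneg _), sq_abs]
    exact hdiscrim
  have hss : discrim a b c = s * s :=
    (Real.mul_self_sqrt ((sq_nonneg _).trans hdiscrim.le)).symm
  obtain ⟨hlo, hhi⟩ := abs_lt.mp hs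
  have h2a : 0 < 2 * a := by positivity
  refine ⟨⟨(-b - s) / (2 * a), (quadratic_eq_zero_iff ha.ne' hss _).2 (Or.inr rfl), ?_⟩,
    ⟨(-b + s) / (2 * a), (quadratic_eq_zero_iff ha.ne' hss _).2 (Or.inl rfl), ?_⟩⟩
  · rw [div_lt_iff₀ h2a]
    linarith
  · rw [lt_div_iff₀ h2a]
    linarith

theorem pow_add_three_eq_of_pow_three_eq {R : Type*} [CommRing R] {a b c ρ : R}
    (h : ρ ^ 3 = a * ρ ^ 2 + b * ρ + c) (n : ℕ) :
    ρ ^ (n + 3) = a * ρ ^ (n + 2) + b * ρ ^ (n + 1) + c * ρ ^ n := by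
  simp only [pow_add]
  linear_combination ρ ^ n * h

section ZeroSNet

variable {l : ℝ}

theorem zerosQuadFactorR_eq_zero_iff (hl : l ≠ 0) (ρ : ℝ) :
    zerosQuadFactorR l ρ = 0 ↔ 4 * l * (ρ * ρ) + (l - 3) * ρ + (1 + l) = 0 := by
  have hscale : 4 * l * (ρ * ρ) + (l - 3) * ρ + (1 + l) = 4 * l * zerosQuadFactorR l ρ := by
    unfold zerosQuadFactorR
    field_simp
  simp [hscale, hl]

theorem zerosnet_charPoly_eq_mul_zerosQuadFactorR (hl : l ≠ 0) (ρ : ℝ) :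
    ρ ^ 3 - (zerosAlpha0 l * ρ ^ 2 + zerosAlpha1 l * ρ + zerosAlpha2 l) =
      (ρ - 1) * zerosQuadFactorR l ρ := by
  unfold zerosAlpha0 zerosAlpha1 zerosAlpha2 zerosQuadFactorR
  field_simp
  ring

theorem exists_zerosQuadFactorR_eq_zero_one_lt_abs
    (hl : (-1 < l ∧ l < 0) ∨ (0 < l ∧ l < 1 / 3)) :
    ∃ ρ : ℝ, zerosQuadFactorR l ρ = 0 ∧ 1 < |ρ| := by
  rcases hl with ⟨hl₁, hl₂⟩ | ⟨hl₁, hl₂⟩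
  · obtain ⟨ρ, hroot, hρ⟩ := (exists_quadratic_eq_zero_lt_and_gt (a := -4 * l) (b := -(l - 3))
      (c := -(1 + l)) (x₀ := -1) (by linarith) (by linarith)).1
    refine ⟨ρ, (zerosQuadFactorR_eq_zero_iff hl₂.ne ρ).2 (by linear_combination -hroot), ?_⟩
    exact lt_abs.2 (Or.inr (by linarith))
  · obtain ⟨ρ, hroot, hρ⟩ := (exists_quadratic_eq_zero_lt_and_gt (a := 4 * l) (b := l - 3)
      (c := 1 + l) (x₀ := 1) (by linarith) (by linarith)).2
    exact ⟨ρ, (zerosQuadFactorR_eq_zero_iff hl₁.ne' ρ).2 hroot, hρ.trans_le (le_abs_self ρ)⟩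

end ZeroSNet

theorem zerosnet_unstable_outside_region (l : ℝ)
    (hl : (-1 < l ∧ l < 0) ∨ (0 < l ∧ l < 1 / 3)) :
    (∃ ρ : ℝ, zerosQuadFactorR l ρ = 0 ∧ 1 < |ρ|) ∧
    ∃ y : ℕ → ℝ,
      (∀ n : ℕ, y (n + 3) = zerosAlpha0 l * y (n + 2) + zerosAlpha1 l * y (n + 1)
        + zerosAlpha2 l * y n) ∧
      Filter.Tendsto (fun n : ℕ => |y n|) Filter.atTop Filter.atTop := by
  have hl₀ : l ≠ 0 := by
    rcases hl with ⟨_, h⟩ | ⟨h, _⟩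
    exacts [h.ne, h.ne']
  obtain ⟨ρ, hroot, hρ⟩ := exists_zerosQuadFactorR_eq_zero_one_lt_abs hl
  have hchar : ρ ^ 3 = zerosAlpha0 l * ρ ^ 2 + zerosAlpha1 l * ρ + zerosAlpha2 l := by
    rw [← sub_eq_zero, zerosnet_charPoly_eq_mul_zerosQuadFactorR hl₀, hroot, mul_zero]
  refine ⟨⟨ρ, hroot, hρ⟩, (ρ ^ ·), pow_add_three_eq_of_pow_three_eq hchar, ?_⟩
  simpa only [abs_pow] using tendsto_pow_atTop_atTop_of_one_lt hρ
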